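/- arXiv:1502.02470 — 2 statements merged into one kernel-verified Lean document; each statement's English description precedes it below -/
import Mathlib

section
/- Setting c = q^{1/2} in the Bailey pair of Lemma 2.7 and replacing q by q², one obtains the Bailey pair relative to q⁴ in base q⁴: β_n = 2/((-q⁴;q²)_{2n}(q²;q⁴)_{n+1}) and α_n = q^{n(n+1)} ( (-1)^n q^{2n²+n}(1+q^{2n+1})/(1-q²) · Σ_{|j|≤n} q^{-j²} + q^{2n²+n}(1-q^{2n+1})/(1-q²) · Σ_{|j|≤n} (-1)^j q^{-j²} ). -/
/-!
Put `s = q²` and `p = s² = q⁴`. Splitting the partial theta sums `∑_{|k| ≤ n} q^{-k²}` and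
`∑_{|k| ≤ n} (-1)^k q^{-k²}` by the parity of `k` (with `k = m - 2i`) rewrites `α_n` as
`2 / (1 - s) * (-1)^n s^{n(n+1)} (g_n + pⁿ g_{n-1})`, where `g_m = ∑_i p^{i(m-i)}`. Dividing by
`(p;p)_{n-j} (p²;p)_{n+j}` produces the Gaussian binomials `[2n+1, n-j]_p`, so the Bailey relation
reduces to `∑_j (-1)^j s^{j(j+1)} (g_j + p^j g_{j-1}) [2n+1, n-j]_p = (p;p)_n`. This is proved
by induction on `n`: passing from `n` to `n + 1` multiplies the sum by `1 - p^{n+1}` up to a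
telescoping sum of explicit certificates. The remaining product identity follows from
`(a;s)_{2n} = (a;s²)_n (as;s²)_n` and `(a;s)_n (-a;s)_n = (a²;s²)_n`.
-/

open scoped BigOperators

/-- Finite q-Pochhammer symbol `(a;q)_n`. -/
noncomputable def qPoch (a q : ℂ) (n : ℕ) : ℂ := ∏ k ∈ Finset.range n, (1 - a * q ^ k)

/-- Infinite q-Pochhammer symbol `(a;q)_∞`. -/
noncomputable def qPochInf (a q : ℂ) : ℂ := ∏' k : ℕ, (1 - a * q ^ k)

/-- q-Pochhammer symbol with integer index: `(a;q)_m`, where for negative `m`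
`(a;q)_{-k} = 1/∏_{j=1}^{k}(1 - a q^{-j})`. -/
noncomputable def qPochZ (a q : ℂ) (m : ℤ) : ℂ :=
  if 0 ≤ m then qPoch a q m.toNat
  else 1 / ∏ k ∈ Finset.range (-m).toNat, (1 - a * q ^ (-(k : ℤ) - 1))

/-- `(α, β)` is a Bailey pair relative to `a` in base `q`. -/
def IsBaileyPair (q a : ℂ) (α β : ℕ → ℂ) : Prop :=
  ∀ n : ℕ, β n = ∑ j ∈ Finset.range (n + 1),
    α j / (qPoch q q (n - j) * qPoch (a * q) q (n + j))

/-- The Andrews–Hickerson Bailey pair `α*_n(a,b,c,q)` (Lemma 2.1). -/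
noncomputable def alphaStar (a b c q : ℂ) (n : ℕ) : ℂ :=
  q ^ (n ^ 2) * (b * c) ^ n * (1 - a * q ^ (2 * n)) * qPoch (a / b) q n * qPoch (a / c) q n /
      ((1 - a) * qPoch (b * q) q n * qPoch (c * q) q n) *
    ∑ j ∈ Finset.range (n + 1),
      (-1 : ℂ) ^ j * (1 - a * q ^ (2 * (j : ℤ) - 1)) * qPochZ a q ((j : ℤ) - 1) *
          qPoch b q j * qPoch c q j /
        (q ^ (j * (j - 1) / 2) * (b * c) ^ j * qPoch q q j * qPoch (a / b) q j *
          qPoch (a / c) q j)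

open Finset

lemma one_sub_ne_zero_of_norm_lt_one {z : ℂ} (hz : ‖z‖ < 1) : 1 - z ≠ 0 := by
  rw [sub_ne_zero]
  rintro rfl
  simp at hz

lemma norm_pow_lt_one {z : ℂ} (hz : ‖z‖ < 1) {k : ℕ} (hk : k ≠ 0) : ‖z ^ k‖ < 1 := by
  simpa [norm_pow] using pow_lt_one₀ (norm_nonneg z) hz hk

lemma one_sub_pow_ne_zero {p : ℂ} (hp : ‖p‖ < 1) {k : ℕ} (hk : k ≠ 0) : 1 - p ^ k ≠ 0 :=
  one_sub_ne_zero_of_norm_lt_one (norm_pow_lt_one hp hk)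

@[simp]
lemma qPoch_zero (a p : ℂ) : qPoch a p 0 = 1 :=
  prod_range_zero _

lemma qPoch_succ (a p : ℂ) (n : ℕ) : qPoch a p (n + 1) = qPoch a p n * (1 - a * p ^ n) :=
  prod_range_succ _ _

lemma qPoch_succ' (a p : ℂ) (n : ℕ) : qPoch a p (n + 1) = (1 - a) * qPoch (a * p) p n := by
  simp only [qPoch, prod_range_succ', pow_zero, mul_one, pow_succ', mul_assoc, mul_comm]

lemma qPoch_self_succ (p : ℂ) (n : ℕ) :
    qPoch p p (n + 1) = qPoch p p n * (1 - p ^ (n + 1)) := by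
  rw [qPoch_succ, pow_succ']

lemma qPoch_ne_zero {a p : ℂ} (ha : ‖a‖ < 1) (hp : ‖p‖ ≤ 1) (n : ℕ) :
    qPoch a p n ≠ 0 :=
  prod_ne_zero_iff.2 fun k _ => one_sub_ne_zero_of_norm_lt_one <| by
    rw [norm_mul, norm_pow]
    exact (mul_le_of_le_one_right (norm_nonneg a) (pow_le_one₀ (norm_nonneg p) hp)).trans_lt ha

lemma qPoch_two_mul (a p : ℂ) (n : ℕ) :
    qPoch a p (2 * n) = qPoch a (p ^ 2) n * qPoch (a * p) (p ^ 2) n := by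
  induction n with
  | zero => simp
  | succ n ih =>
    rw [show 2 * (n + 1) = 2 * n + 1 + 1 by ring, qPoch_succ, qPoch_succ, ih, qPoch_succ,
      qPoch_succ]
    ring

lemma qPoch_mul_qPoch_neg (a p : ℂ) (n : ℕ) :
    qPoch a p n * qPoch (-a) p n = qPoch (a ^ 2) (p ^ 2) n := by
  induction n with
  | zero => simp
  | succ n ih =>
    rw [qPoch_succ, qPoch_succ, qPoch_succ, ← ih]
    ring

lemma qPoch_sq_two_mul_add_one (s : ℂ) (n : ℕ) :
    (1 - s) * qPoch (s ^ 2) (s ^ 2) (2 * n + 1) = (1 - s ^ 2) * qPoch (s ^ 2) (s ^ 2) n *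
      (qPoch (-(s ^ 2)) s (2 * n) * qPoch s (s ^ 2) (n + 1)) := by
  have hodd := qPoch_mul_qPoch_neg (s ^ 3) (s ^ 2) n
  have heven := qPoch_mul_qPoch_neg (s ^ 2) (s ^ 2) n
  rw [qPoch_succ', qPoch_two_mul, qPoch_two_mul, qPoch_succ',
    show s ^ 2 * s ^ 2 = (s ^ 2) ^ 2 by ring, show (s ^ 2) ^ 2 * s ^ 2 = (s ^ 3) ^ 2 by ring,
    show -(s ^ 2) * s = -(s ^ 3) by ring,
    show s * s ^ 2 = s ^ 3 by ring, ← hodd, ← heven]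
  ring

section QBinomial

variable {p : ℂ}

noncomputable def qBinom (p : ℂ) (m : ℕ) (k : ℤ) : ℂ :=
  if 0 ≤ k ∧ k ≤ m then qPoch p p m / (qPoch p p k.toNat * qPoch p p (m - k.toNat)) else 0

lemma qBinom_of_neg (m : ℕ) {k : ℤ} (hk : k < 0) : qBinom p m k = 0 :=
  if_neg fun h => by omega

lemma qBinom_add (a b : ℕ) :
    qBinom p (a + b) a = qPoch p p (a + b) / (qPoch p p a * qPoch p p b) := by
  rw [qBinom, if_pos ⟨by positivity, by push_cast; omega⟩]
  simp

lemma qBinom_add_symm (a b : ℕ) : qBinom p (a + b) b = qBinom p (a + b) a := by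
  rw [qBinom_add, add_comm, qBinom_add, mul_comm]

lemma qBinom_zero_right (hp : ‖p‖ < 1) (m : ℕ) : qBinom p m 0 = 1 := by
  have h := qBinom_add (p := p) 0 m
  rw [zero_add, Nat.cast_zero] at h
  rw [h, qPoch_zero, one_mul, div_self (qPoch_ne_zero hp hp.le m)]

lemma qBinom_succ_mul (hp : ‖p‖ < 1) (a b : ℕ) :
    (1 - p ^ (a + 1)) * qBinom p (a + b + 1) ((a : ℤ) + 1) =
      (1 - p ^ (b + 1)) * qBinom p (a + b + 1) a := by
  have h := qBinom_add (p := p) a (b + 1)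
  rw [← add_assoc] at h
  rw [← Nat.cast_succ, add_right_comm, qBinom_add, add_right_comm, h, qPoch_self_succ p a,
    qPoch_self_succ p b]
  have := qPoch_ne_zero hp hp.le a
  have := qPoch_ne_zero hp hp.le b
  have := one_sub_pow_ne_zero hp a.succ_ne_zero
  have := one_sub_pow_ne_zero hp b.succ_ne_zero
  field_simp

lemma qBinom_add_two_mul (hp : ‖p‖ < 1) (a b : ℕ) :
    qBinom p (a + b + 2) a * ((1 - p ^ (b + 1)) * (1 - p ^ (b + 2))) =
      qBinom p (a + b) a * ((1 - p ^ (a + b + 1)) * (1 - p ^ (a + b + 2))) := by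
  rw [add_assoc, qBinom_add, qBinom_add, ← add_assoc, qPoch_self_succ, qPoch_self_succ,
    qPoch_self_succ p (b + 1), qPoch_self_succ p b]
  have := qPoch_ne_zero hp hp.le a
  have := qPoch_ne_zero hp hp.le b
  have := one_sub_pow_ne_zero hp (b + 1).succ_ne_zero
  have := one_sub_pow_ne_zero hp b.succ_ne_zero
  field_simp

lemma qBinom_pred_mul (hp : ‖p‖ < 1) (a b : ℕ) :
    (1 - p ^ (b + 1)) * qBinom p (a + b) ((a : ℤ) - 1) = (1 - p ^ a) * qBinom p (a + b) a := by
  cases a with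
  | zero => simp [qBinom_of_neg]
  | succ k =>
    push_cast
    rw [add_sub_cancel_right, add_right_comm]
    exact (qBinom_succ_mul hp k b).symm

lemma div_qPoch_mul_qPoch (hp : ‖p‖ < 1) (x : ℂ) {n j : ℕ} (hj : j ≤ n) :
    x / (qPoch p p (n - j) * qPoch (p * p) p (n + j)) =
      (1 - p) / qPoch p p (2 * n + 1) * (x * qBinom p (2 * n + 1) ((n : ℤ) - j)) := by
  have hbinom := qBinom_add (p := p) (n - j) (n + j + 1)
  rw [show n - j + (n + j + 1) = 2 * n + 1 by omega, Nat.cast_sub hj] at hbinom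
  rw [hbinom, qPoch_succ' p p (n + j)]
  have := one_sub_ne_zero_of_norm_lt_one hp
  have := qPoch_ne_zero hp hp.le (n - j)
  have := qPoch_ne_zero hp hp.le (2 * n + 1)
  have := qPoch_ne_zero (a := p * p) (by
    rw [norm_mul]; exact mul_lt_one_of_nonneg_of_lt_one_left (norm_nonneg p) hp hp.le) hp.le (n + j)
  field_simp

end QBinomial

/-- With `p = q⁴` and `k = m - 2i`,
`q^{-m²} * parityTheta p m = ∑_{|k| ≤ m, k ≡ m (mod 2)} q^{-k²}`. -/
noncomputable def parityTheta (p : ℂ) (m : ℕ) : ℂ :=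
  ∑ i ∈ range (m + 1), p ^ (i * (m - i))

/-- `parityTheta p (j - 1)`, read as `0` (not as `parityTheta p 0`) at `j = 0`. -/
noncomputable def parityThetaPred (p : ℂ) : ℕ → ℂ
  | 0 => 0
  | j + 1 => parityTheta p j

@[simp]
lemma parityThetaPred_succ (p : ℂ) (j : ℕ) : parityThetaPred p (j + 1) = parityTheta p j :=
  rfl

@[simp]
lemma parityTheta_zero (p : ℂ) : parityTheta p 0 = 1 := by
  simp [parityTheta]

lemma parityTheta_add_two (p : ℂ) (m : ℕ) :
    parityTheta p (m + 2) = p ^ (m + 1) * parityTheta p m + 2 := by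
  rw [parityTheta, sum_range_succ, sum_range_succ', parityTheta, mul_sum]
  have hshift : ∀ i ∈ range (m + 1),
      p ^ ((i + 1) * (m + 2 - (i + 1))) = p ^ (m + 1) * p ^ (i * (m - i)) := by
    intro i hi
    rw [← pow_add]
    congr 1
    obtain ⟨k, rfl⟩ := Nat.exists_eq_add_of_le (Nat.lt_succ_iff.1 (mem_range.1 hi))
    rw [show i + k + 2 - (i + 1) = k + 1 by omega, Nat.add_sub_cancel_left]
    ring
  rw [sum_congr rfl hshift]
  simp only [Nat.sub_self, mul_zero, pow_zero, Nat.sub_zero]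
  ring

lemma parityTheta_succ (p : ℂ) (j : ℕ) :
    parityTheta p (j + 1) = p ^ j * parityThetaPred p j + 2 := by
  cases j with
  | zero => norm_num [parityTheta, parityThetaPred, sum_range_succ]
  | succ m => exact parityTheta_add_two p m

noncomputable def thetaCoeff (p : ℂ) (j : ℕ) : ℂ :=
  parityTheta p j + p ^ j * parityThetaPred p j

noncomputable def baileyWeight (s : ℂ) (j : ℕ) : ℂ :=
  (-1) ^ j * s ^ (j * (j + 1)) * thetaCoeff (s ^ 2) j

noncomputable def weightCertificate (s : ℂ) (n j : ℕ) : ℂ :=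
  (-1) ^ j * s ^ (j * (j - 1)) * (s ^ 2) ^ (n + 1) *
    (thetaCoeff (s ^ 2) j * qBinom (s ^ 2) (2 * n + 1) ((n : ℤ) + 1 - j) +
      (s ^ 2) ^ j *
          (parityTheta (s ^ 2) j + (s ^ 2) ^ (n + 1 + j) * parityThetaPred (s ^ 2) j - 2) *
        qBinom (s ^ 2) (2 * n + 1) ((n : ℤ) - j))

lemma baileyWeight_step_of_le {s : ℂ} (hs : ‖s‖ < 1) (j m : ℕ) :
    baileyWeight s j * qBinom (s ^ 2) (2 * (j + m) + 3) ((m : ℤ) + 1) =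
      (1 - (s ^ 2) ^ (j + m + 1)) * (baileyWeight s j * qBinom (s ^ 2) (2 * (j + m) + 1) m) +
        (weightCertificate s (j + m) j - weightCertificate s (j + m) (j + 1)) := by
  have hs2 : ‖s ^ 2‖ < 1 := norm_pow_lt_one hs two_ne_zero
  have hup : qBinom (s ^ 2) (2 * (j + m) + 1) ((m : ℤ) + 1) =
      (1 - (s ^ 2) ^ (m + 2 * j + 1)) * qBinom (s ^ 2) (2 * (j + m) + 1) m /
        (1 - (s ^ 2) ^ (m + 1)) := by
    rw [eq_div_iff (one_sub_pow_ne_zero hs2 m.succ_ne_zero), mul_comm]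
    convert qBinom_succ_mul hs2 m (m + 2 * j) using 3 <;> ring
  have hdown : qBinom (s ^ 2) (2 * (j + m) + 1) ((m : ℤ) - 1) =
      (1 - (s ^ 2) ^ m) * qBinom (s ^ 2) (2 * (j + m) + 1) m /
        (1 - (s ^ 2) ^ (m + 2 * j + 2)) := by
    rw [eq_div_iff (one_sub_pow_ne_zero hs2 (m + 2 * j + 1).succ_ne_zero), mul_comm]
    convert qBinom_pred_mul hs2 m (m + 2 * j + 1) using 3 <;> ring
  have hnext : qBinom (s ^ 2) (2 * (j + m) + 3) ((m : ℤ) + 1) =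
      qBinom (s ^ 2) (2 * (j + m) + 1) ((m : ℤ) + 1) *
        ((1 - (s ^ 2) ^ (2 * (j + m) + 2)) * (1 - (s ^ 2) ^ (2 * (j + m) + 3))) /
          ((1 - (s ^ 2) ^ (m + 2 * j + 1)) * (1 - (s ^ 2) ^ (m + 2 * j + 2))) := by
    rw [eq_div_iff (mul_ne_zero (one_sub_pow_ne_zero hs2 (m + 2 * j).succ_ne_zero)
      (one_sub_pow_ne_zero hs2 (m + 2 * j + 1).succ_ne_zero))]
    convert qBinom_add_two_mul hs2 (m + 1) (m + 2 * j) using 3 <;> push_cast <;> ring_nf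
  have hexp : s ^ (j * (j + 1)) = s ^ (j * (j - 1)) * (s ^ 2) ^ j := by
    rw [← pow_mul, ← pow_add]
    congr 1
    cases j with
    | zero => rfl
    | succ i => rw [Nat.add_sub_cancel]; ring
  have hcast₁ : ((j + m : ℕ) : ℤ) + 1 - (j : ℕ) = (m : ℤ) + 1 := by push_cast; ring
  have hcast₂ : ((j + m : ℕ) : ℤ) - (j : ℕ) = m := by push_cast; ring
  have hcast₃ : ((j + m : ℕ) : ℤ) + 1 - ((j + 1 : ℕ) : ℤ) = m := by push_cast; ring
  have hcast₄ : ((j + m : ℕ) : ℤ) - ((j + 1 : ℕ) : ℤ) = (m : ℤ) - 1 := by push_cast; ring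
  rw [weightCertificate, weightCertificate, baileyWeight, thetaCoeff, thetaCoeff, hcast₁, hcast₂,
    hcast₃, hcast₄, parityThetaPred_succ, parityTheta_succ, Nat.add_sub_cancel,
    mul_comm (j + 1) j, hexp, hnext, hup, hdown]
  have := one_sub_pow_ne_zero hs2 m.succ_ne_zero
  have := one_sub_pow_ne_zero hs2 (m + 2 * j).succ_ne_zero
  have := one_sub_pow_ne_zero hs2 (m + 2 * j + 1).succ_ne_zero
  field_simp
  ring

lemma baileyWeight_step_last {s : ℂ} (hs : ‖s‖ < 1) (n : ℕ) :
    baileyWeight s (n + 1) * qBinom (s ^ 2) (2 * n + 3) 0 =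
      (1 - (s ^ 2) ^ (n + 1)) * (baileyWeight s (n + 1) * qBinom (s ^ 2) (2 * n + 1) (-1)) +
        (weightCertificate s n (n + 1) - weightCertificate s n (n + 2)) := by
  have hs2 : ‖s ^ 2‖ < 1 := norm_pow_lt_one hs two_ne_zero
  have hcast₁ : (n : ℤ) + 1 - ((n + 1 : ℕ) : ℤ) = 0 := by push_cast; ring
  have hcast₂ : (n : ℤ) - ((n + 1 : ℕ) : ℤ) = -1 := by push_cast; ring
  have hcast₃ : (n : ℤ) + 1 - ((n + 2 : ℕ) : ℤ) = -1 := by push_cast; ring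
  have hcast₄ : (n : ℤ) - ((n + 2 : ℕ) : ℤ) = -2 := by push_cast; ring
  rw [weightCertificate, weightCertificate, hcast₁, hcast₂, hcast₃, hcast₄, qBinom_zero_right hs2,
    qBinom_zero_right hs2, qBinom_of_neg _ (by norm_num : (-1 : ℤ) < 0),
    qBinom_of_neg _ (by norm_num : (-2 : ℤ) < 0), baileyWeight, Nat.add_sub_cancel]
  ring

lemma weightCertificate_zero (s : ℂ) (n : ℕ) : weightCertificate s n 0 = 0 := by
  have hsymm := qBinom_add_symm (p := s ^ 2) n (n + 1)
  rw [← add_assoc, ← two_mul] at hsymm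
  push_cast at hsymm
  simp only [weightCertificate, thetaCoeff, parityThetaPred, parityTheta_zero, Nat.cast_zero,
    sub_zero, hsymm]
  ring

lemma weightCertificate_top (s : ℂ) (n : ℕ) : weightCertificate s n (n + 2) = 0 := by
  rw [weightCertificate, qBinom_of_neg _ (by push_cast; linarith),
    qBinom_of_neg _ (by push_cast; linarith)]
  ring

lemma baileyWeight_step {s : ℂ} (hs : ‖s‖ < 1) {n j : ℕ} (hj : j ≤ n + 1) :
    baileyWeight s j * qBinom (s ^ 2) (2 * n + 3) ((n : ℤ) + 1 - j) =
      (1 - (s ^ 2) ^ (n + 1)) * (baileyWeight s j * qBinom (s ^ 2) (2 * n + 1) ((n : ℤ) - j)) +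
        (weightCertificate s n j - weightCertificate s n (j + 1)) := by
  rcases hj.lt_or_eq with hj | rfl
  · obtain ⟨m, rfl⟩ := Nat.exists_eq_add_of_le (Nat.lt_succ_iff.1 hj)
    rw [show ((j + m : ℕ) : ℤ) + 1 - j = m + 1 by push_cast; ring,
      show ((j + m : ℕ) : ℤ) - j = m by push_cast; ring]
    exact baileyWeight_step_of_le hs j m
  · rw [show (n : ℤ) + 1 - (n + 1 : ℕ) = 0 by push_cast; ring,
      show (n : ℤ) - (n + 1 : ℕ) = -1 by push_cast; ring]
    exact baileyWeight_step_last hs n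

theorem sum_baileyWeight_mul_qBinom {s : ℂ} (hs : ‖s‖ < 1) (n : ℕ) :
    ∑ j ∈ range (n + 1), baileyWeight s j * qBinom (s ^ 2) (2 * n + 1) ((n : ℤ) - j) =
      qPoch (s ^ 2) (s ^ 2) n := by
  have hs2 : ‖s ^ 2‖ < 1 := norm_pow_lt_one hs two_ne_zero
  induction n with
  | zero => simp [baileyWeight, thetaCoeff, parityThetaPred, qBinom_zero_right hs2]
  | succ n ih =>
    have hstep : ∀ j ∈ range (n + 2), baileyWeight s j *
        qBinom (s ^ 2) (2 * (n + 1) + 1) (((n + 1 : ℕ) : ℤ) - j) =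
          (1 - (s ^ 2) ^ (n + 1)) *
              (baileyWeight s j * qBinom (s ^ 2) (2 * n + 1) ((n : ℤ) - j)) +
            (weightCertificate s n j - weightCertificate s n (j + 1)) := fun j hj => by
      rw [Nat.cast_succ, show 2 * (n + 1) + 1 = 2 * n + 3 by ring,
        ← baileyWeight_step hs (Nat.lt_succ_iff.1 (mem_range.1 hj))]
    rw [sum_congr rfl hstep, sum_add_distrib, ← mul_sum, sum_range_sub', weightCertificate_zero,
      weightCertificate_top, sum_range_succ, qBinom_of_neg _ (by push_cast; linarith), mul_zero,
      add_zero, ih, qPoch_self_succ]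
    ring

lemma sum_Icc_neg_add_one {M : Type*} [AddCommMonoid M] (n : ℕ) (F : ℤ → M) :
    ∑ k ∈ Icc (-((n : ℤ) + 1)) (n + 1), F k =
      F (-((n : ℤ) + 1)) + F ((n : ℤ) + 1) + ∑ k ∈ Icc (-(n : ℤ)) n, F k := by
  have hIcc : Icc (-((n : ℤ) + 1)) (n + 1) =
      insert (-((n : ℤ) + 1)) (insert ((n : ℤ) + 1) (Icc (-(n : ℤ)) n)) := by
    ext k
    simp only [mem_Icc, mem_insert]
    omega
  rw [hIcc, sum_insert (by simp only [mem_insert, mem_Icc]; omega),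
    sum_insert (by simp only [mem_Icc]; omega), add_assoc]

lemma partialTheta_add_sub {q : ℂ} (hq0 : q ≠ 0) (n : ℕ) :
    ∑ k ∈ Icc (-(n : ℤ)) n, q ^ (-k ^ 2) +
          (-1) ^ n * ∑ k ∈ Icc (-(n : ℤ)) n, (-1) ^ k * q ^ (-k ^ 2) =
        2 * q ^ (-(n : ℤ) ^ 2) * parityTheta (q ^ 4) n ∧
      ∑ k ∈ Icc (-(n : ℤ)) n, q ^ (-k ^ 2) -
          (-1) ^ n * ∑ k ∈ Icc (-(n : ℤ)) n, (-1) ^ k * q ^ (-k ^ 2) =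
        2 * q ^ (-((n : ℤ) - 1) ^ 2) * parityThetaPred (q ^ 4) n := by
  induction n with
  | zero => norm_num [parityThetaPred]
  | succ n ih =>
    obtain ⟨ihAdd, ihSub⟩ := ih
    have hsign : (-1 : ℂ) ^ n * (-1) ^ n = 1 := by rw [← mul_pow]; simp
    have hpos : (-1 : ℂ) ^ ((n : ℤ) + 1) = -(-1) ^ n := by
      rw [← Nat.cast_succ, zpow_natCast, pow_succ, mul_neg_one]
    have hneg : (-1 : ℂ) ^ (-((n : ℤ) + 1)) = -(-1) ^ n := by
      rw [← Int.cast_negOnePow, Int.negOnePow_neg, Int.cast_negOnePow, hpos]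
    have hshift : q ^ (-((n : ℤ) + 1) ^ 2) * (q ^ 4) ^ n = q ^ (-((n : ℤ) - 1) ^ 2) := by
      rw [← zpow_natCast, ← zpow_natCast, ← zpow_mul, ← zpow_add₀ hq0]
      congr 1
      push_cast
      ring
    push_cast
    rw [sum_Icc_neg_add_one, sum_Icc_neg_add_one, hpos, hneg, neg_sq, parityTheta_succ,
      parityThetaPred_succ, add_sub_cancel_right, pow_succ (-1 : ℂ) n, mul_neg_one]
    constructor
    · linear_combination ihSub + 2 * q ^ (-((n : ℤ) + 1) ^ 2) * hsign -
        2 * parityThetaPred (q ^ 4) n * hshift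
    · linear_combination ihAdd - 2 * q ^ (-((n : ℤ) + 1) ^ 2) * hsign

lemma alpha_eq_baileyWeight {q : ℂ} (hq0 : q ≠ 0) (n : ℕ) :
    q ^ (n * (n + 1)) *
        ((-1 : ℂ) ^ n * q ^ (2 * n ^ 2 + n) * (1 + q ^ (2 * n + 1)) / (1 - q ^ 2) *
            ∑ j ∈ Icc (-(n : ℤ)) (n : ℤ), q ^ (-j ^ 2) +
          q ^ (2 * n ^ 2 + n) * (1 - q ^ (2 * n + 1)) / (1 - q ^ 2) *
            ∑ j ∈ Icc (-(n : ℤ)) (n : ℤ), (-1 : ℂ) ^ j * q ^ (-j ^ 2)) =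
      2 / (1 - q ^ 2) * baileyWeight (q ^ 2) n := by
  obtain ⟨hAdd, hSub⟩ := partialTheta_add_sub hq0 n
  set T := ∑ j ∈ Icc (-(n : ℤ)) (n : ℤ), q ^ (-j ^ 2)
  set T' := ∑ j ∈ Icc (-(n : ℤ)) (n : ℤ), (-1 : ℂ) ^ j * q ^ (-j ^ 2)
  have hsign : (-1 : ℂ) ^ n * (-1) ^ n = 1 := by rw [← mul_pow]; simp
  have hexp₁ : q ^ (n * (n + 1)) * q ^ (2 * n ^ 2 + n) * q ^ (-(n : ℤ) ^ 2) =
      (q ^ 2) ^ (n * (n + 1)) := by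
    rw [← pow_mul]
    simp only [← zpow_natCast, ← zpow_add₀ hq0]
    congr 1
    push_cast
    ring
  have hexp₂ :
      q ^ (n * (n + 1)) * q ^ (2 * n ^ 2 + n) * q ^ (2 * n + 1) * q ^ (-((n : ℤ) - 1) ^ 2) =
        (q ^ 2) ^ (n * (n + 1)) * (q ^ 4) ^ n := by
    rw [← pow_mul, ← pow_mul, ← pow_add]
    simp only [← zpow_natCast, ← zpow_add₀ hq0]
    congr 1
    push_cast
    ring
  set C := q ^ (n * (n + 1)) * q ^ (2 * n ^ 2 + n) / (1 - q ^ 2)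
  rw [baileyWeight, thetaCoeff, show (q ^ 2) ^ 2 = q ^ 4 by ring]
  linear_combination C * (-1) ^ n * hAdd + C * q ^ (2 * n + 1) * (-1) ^ n * hSub
    - C * (1 - q ^ (2 * n + 1)) * T' * hsign
    + 2 * (-1) ^ n * parityTheta (q ^ 4) n / (1 - q ^ 2) * hexp₁
    + 2 * (-1) ^ n * parityThetaPred (q ^ 4) n / (1 - q ^ 2) * hexp₂

theorem stmt7 (q : ℂ) (hq : ‖q‖ < 1) (hq0 : q ≠ 0) :
    IsBaileyPair (q ^ 4) (q ^ 4)
      (fun n => q ^ (n * (n + 1)) *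
        ((-1 : ℂ) ^ n * q ^ (2 * n ^ 2 + n) * (1 + q ^ (2 * n + 1)) / (1 - q ^ 2) *
            ∑ j ∈ Finset.Icc (-(n : ℤ)) (n : ℤ), q ^ (-j ^ 2) +
          q ^ (2 * n ^ 2 + n) * (1 - q ^ (2 * n + 1)) / (1 - q ^ 2) *
            ∑ j ∈ Finset.Icc (-(n : ℤ)) (n : ℤ), (-1 : ℂ) ^ j * q ^ (-j ^ 2)))
      (fun n => 2 / (qPoch (-(q ^ 4)) (q ^ 2) (2 * n) * qPoch (q ^ 2) (q ^ 4) (n + 1))) := by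
  intro n
  simp only [alpha_eq_baileyWeight hq0, show q ^ 4 = (q ^ 2) ^ 2 by ring]
  have hs : ‖q ^ 2‖ < 1 := norm_pow_lt_one hq two_ne_zero
  generalize q ^ 2 = s at hs ⊢
  have hs2 : ‖s ^ 2‖ < 1 := norm_pow_lt_one hs two_ne_zero
  rw [sum_congr rfl fun j hj => div_qPoch_mul_qPoch hs2 _ (Nat.lt_succ_iff.1 (mem_range.1 hj)),
    ← mul_sum]
  simp only [mul_assoc (2 / (1 - s))]
  rw [← mul_sum, sum_baileyWeight_mul_qBinom hs n]
  have hkey := qPoch_sq_two_mul_add_one s n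
  have := one_sub_ne_zero_of_norm_lt_one hs
  have := qPoch_ne_zero hs2 hs2.le (2 * n + 1)
  have := qPoch_ne_zero (by rwa [norm_neg]) hs.le (2 * n)
  have := qPoch_ne_zero hs hs2.le (n + 1)
  field_simp
  linear_combination hkey
end

section
/- G₂(q) := Σ_{n≥0} q^{7n²+6n}(1-q^{2n+1}) Σ_{|j|≤n} (-1)^j q^{-j²} satisfies G₂(q) = f_{12,16,12}(q^{12}, q^{12}, q) + q^{13} f_{12,16,12}(q^{26}, q^{26}, q), where f_{a,b,c}(x,y,q) = (Σ_{r,s≥0} - Σ_{r,s<0}) (-1)^{r+s} x^r y^s q^{ar(r-1)/2+brs+cs(s-1)/2}. -/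
/-!
Split `∑_n ∑_{|j| ≤ n}` according to the parity of `n + j`: the substitutions
`(n, j) = (r + s, r - s)` and `(n, j) = (r + s + 1, r - s)` map `ℕ × ℕ` bijectively onto the two
halves of the cone `|j| ≤ n`. Under them the exponent `7n² + 6n - j²` becomes the quadratic form
`6r² + 16rs + 6s²` of `f_{12,16,12}` plus a linear part, giving the sums over `r, s ≥ 0` of the two
Hecke sums, while the exponent `7n² + 8n + 1 - j²` of the subtracted terms becomes, after
`(r, s) ↦ (-r - 1, -s - 1)`, that of their sums over `r, s < 0`.
-/

open scoped BigOperators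

/-- Hecke-type double sum `f_{a,b,c}(x,y,q)`: the sum over `r,s ≥ 0` minus the sum
over `r,s < 0` of `(-1)^{r+s} x^r y^s q^{ar(r-1)/2+brs+cs(s-1)/2}`. -/
noncomputable def heckeF (a b c : ℤ) (x y q : ℂ) : ℂ :=
  (∑' p : ℕ × ℕ, (-1 : ℂ) ^ (p.1 + p.2) * x ^ p.1 * y ^ p.2 *
      q ^ (a * ((p.1 : ℤ) * ((p.1 : ℤ) - 1) / 2) + b * p.1 * p.2 +
        c * ((p.2 : ℤ) * ((p.2 : ℤ) - 1) / 2))) -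
  (∑' p : ℕ × ℕ, (-1 : ℂ) ^ ((-(p.1 : ℤ) - 1) + (-(p.2 : ℤ) - 1)) *
      x ^ (-(p.1 : ℤ) - 1) * y ^ (-(p.2 : ℤ) - 1) *
      q ^ (a * ((-(p.1 : ℤ) - 1) * ((-(p.1 : ℤ) - 1) - 1) / 2) +
        b * (-(p.1 : ℤ) - 1) * (-(p.2 : ℤ) - 1) +
        c * ((-(p.2 : ℤ) - 1) * ((-(p.2 : ℤ) - 1) - 1) / 2)))

theorem hasSum_sum_Icc_of_hasSum_diagonals {M : Type*} [AddCommMonoid M] [TopologicalSpace M]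
    [ContinuousAdd M] [RegularSpace M] {G : ℕ → ℤ → M} {a b : M}
    (ha : HasSum (fun p : ℕ × ℕ => G (p.1 + p.2) ((p.1 : ℤ) - p.2)) a)
    (hb : HasSum (fun p : ℕ × ℕ => G (p.1 + p.2 + 1) ((p.1 : ℤ) - p.2)) b) :
    HasSum (fun n : ℕ => ∑ j ∈ Finset.Icc (-(n : ℤ)) n, G n j) (a + b) := by
  let F : ℕ × ℤ → M := fun x => if x.2 ∈ Finset.Icc (-(x.1 : ℤ)) x.1 then G x.1 x.2 else 0
  let e : (ℕ × ℕ) ⊕ (ℕ × ℕ) → ℕ × ℤ :=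
    Sum.elim (fun p => (p.1 + p.2, (p.1 : ℤ) - p.2)) (fun p => (p.1 + p.2 + 1, (p.1 : ℤ) - p.2))
  have he : e.Injective := by
    rintro (⟨r, s⟩ | ⟨r, s⟩) (⟨r', s'⟩ | ⟨r', s'⟩) h <;>
      simp only [e, Sum.elim_inl, Sum.elim_inr, Prod.mk.injEq, Sum.inl.injEq, Sum.inr.injEq,
        reduceCtorEq] at h ⊢ <;> omega
  have hF : ∀ x ∉ Set.range e, F x = 0 := by
    rintro ⟨n, j⟩ hx
    refine if_neg fun hj => hx ?_
    rw [Finset.mem_Icc] at hj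
    rcases Int.emod_two_eq ((n : ℤ) + j) with h | h
    · exact ⟨.inl ((((n : ℤ) + j) / 2).toNat, (((n : ℤ) - j) / 2).toNat), by
        simp only [e, Sum.elim_inl, Prod.mk.injEq]; omega⟩
    · exact ⟨.inr ((((n : ℤ) + j) / 2).toNat, (((n : ℤ) - j) / 2).toNat), by
        simp only [e, Sum.elim_inr, Prod.mk.injEq]; omega⟩
  have hFe : HasSum (F ∘ e) (a + b) := by
    refine HasSum.sum ?_ ?_
    · convert ha using 2 with p
      exact if_pos (Finset.mem_Icc.mpr (by simp only [e, Sum.elim_inl]; omega))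
    · convert hb using 2 with p
      exact if_pos (Finset.mem_Icc.mpr (by simp only [e, Sum.elim_inr]; push_cast; omega))
  refine ((he.hasSum_iff hF).mp hFe).prod_fiberwise fun n => ?_
  have hfin : HasSum (fun j => F (n, j)) (∑ j ∈ Finset.Icc (-(n : ℤ)) n, F (n, j)) :=
    hasSum_sum_of_ne_finset_zero fun j hj => if_neg hj
  convert hfin using 1
  exact Finset.sum_congr rfl fun j hj => (if_pos hj).symm

theorem summable_of_norm_le_pow_add {E : Type*} [NormedAddCommGroup E] [CompleteSpace E]
    {f : ℕ × ℕ → E} {ρ : ℝ} (h0 : 0 ≤ ρ) (h1 : ρ < 1) (hf : ∀ p, ‖f p‖ ≤ ρ ^ (p.1 + p.2)) :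
    Summable f := by
  have hg := summable_geometric_of_lt_one h0 h1
  refine Summable.of_norm_bounded
    (hg.mul_of_nonneg hg (fun _ => by positivity) fun _ => by positivity) fun p => ?_
  simpa only [pow_add] using hf p

theorem neg_one_zpow_mul_zpow_congr (q : ℂ) {j j' e e' : ℤ} (hj : Even (j - j')) (he : e = e') :
    (-1 : ℂ) ^ j * q ^ e = (-1 : ℂ) ^ j' * q ^ e' := by
  rw [he, ← Int.cast_negOnePow ℂ, ← Int.cast_negOnePow ℂ, (Int.negOnePow_eq_iff _ _).mpr hj]

theorem norm_neg_one_zpow_mul_zpow (q : ℂ) (j e : ℤ) : ‖(-1 : ℂ) ^ j * q ^ e‖ = ‖q‖ ^ e := by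
  rw [norm_mul, norm_zpow, norm_zpow, norm_neg, norm_one, one_zpow, one_mul]

noncomputable def heckeTerm (a b c : ℤ) (x y q : ℂ) (r s : ℤ) : ℂ :=
  (-1 : ℂ) ^ (r + s) * x ^ r * y ^ s *
    q ^ (a * (r * (r - 1) / 2) + b * r * s + c * (s * (s - 1) / 2))

theorem heckeF_eq_tsum_sub_tsum (a b c : ℤ) (x y q : ℂ) :
    heckeF a b c x y q = ∑' p : ℕ × ℕ, heckeTerm a b c x y q p.1 p.2 -
      ∑' p : ℕ × ℕ, heckeTerm a b c x y q (-(p.1 : ℤ) - 1) (-(p.2 : ℤ) - 1) :=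
  rfl

theorem twelve_mul_choose_two (m : ℤ) : 12 * (m * (m - 1) / 2) = 6 * (m * (m - 1)) := by
  obtain ⟨t, ht⟩ := Int.even_mul_pred_self m
  rw [ht]
  omega

theorem heckeTerm_12_16_12 {q : ℂ} (hq0 : q ≠ 0) (k : ℕ) (r s : ℤ) :
    heckeTerm 12 16 12 (q ^ k) (q ^ k) q r s =
      (-1 : ℂ) ^ (r + s) * q ^ (6 * r ^ 2 + 16 * r * s + 6 * s ^ 2 + (k - 6) * (r + s)) := by
  rw [heckeTerm, twelve_mul_choose_two, twelve_mul_choose_two, ← zpow_natCast q k, ← zpow_mul,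
    ← zpow_mul, mul_assoc, mul_assoc, ← zpow_add₀ hq0, ← zpow_add₀ hq0]
  congr 2
  ring

section G2

variable {q : ℂ}

noncomputable def g2Term (q : ℂ) (c d : ℤ) (n : ℕ) (j : ℤ) : ℂ :=
  (-1 : ℂ) ^ j * q ^ (7 * (n : ℤ) ^ 2 + c * n + d - j ^ 2)

theorem g2_summand_eq (hq0 : q ≠ 0) (n : ℕ) :
    q ^ (7 * n ^ 2 + 6 * n) * (1 - q ^ (2 * n + 1)) *
        ∑ j ∈ Finset.Icc (-(n : ℤ)) n, (-1 : ℂ) ^ j * q ^ (-j ^ 2) =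
      ∑ j ∈ Finset.Icc (-(n : ℤ)) n, g2Term q 6 0 n j -
        ∑ j ∈ Finset.Icc (-(n : ℤ)) n, g2Term q 8 1 n j := by
  rw [mul_one_sub, sub_mul, ← pow_add, Finset.mul_sum, Finset.mul_sum]
  congr 1 <;> refine Finset.sum_congr rfl fun j _ => ?_ <;>
    rw [g2Term, mul_left_comm, ← zpow_natCast, ← zpow_add₀ hq0] <;> push_cast <;> ring_nf

theorem summable_g2Term_diagonal (hq : ‖q‖ < 1) (hq0 : q ≠ 0) {c d : ℤ} (hc : 0 ≤ c)
    (hd : 0 ≤ d) (k : ℕ) :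
    Summable fun p : ℕ × ℕ => g2Term q c d (p.1 + p.2 + k) ((p.1 : ℤ) - p.2) := by
  refine summable_of_norm_le_pow_add (norm_nonneg q) hq fun p => ?_
  rw [g2Term, norm_neg_one_zpow_mul_zpow, ← zpow_natCast]
  refine zpow_le_zpow_right_of_le_one₀ (norm_pos_iff.mpr hq0) hq.le ?_
  have hr : (0 : ℤ) ≤ p.1 := p.1.cast_nonneg
  have hs : (0 : ℤ) ≤ p.2 := p.2.cast_nonneg
  have hk : (0 : ℤ) ≤ k := k.cast_nonneg
  have hn : (0 : ℤ) ≤ p.1 + p.2 + k := by positivity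
  push_cast
  nlinarith [Int.le_self_sq ((p.1 : ℤ) + p.2 + k), mul_nonneg hr hs, mul_nonneg hk hn,
    mul_nonneg hc hn]

theorem g2Term_6_0_even (hq0 : q ≠ 0) (r s : ℕ) :
    g2Term q 6 0 (r + s) ((r : ℤ) - s) = heckeTerm 12 16 12 (q ^ 12) (q ^ 12) q r s := by
  rw [heckeTerm_12_16_12 hq0, g2Term]
  exact neg_one_zpow_mul_zpow_congr q (Int.even_iff.mpr (by omega)) (by push_cast; ring)

theorem g2Term_6_0_odd (hq0 : q ≠ 0) (r s : ℕ) :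
    g2Term q 6 0 (r + s + 1) ((r : ℤ) - s) =
      q ^ 13 * heckeTerm 12 16 12 (q ^ 26) (q ^ 26) q r s := by
  rw [heckeTerm_12_16_12 hq0, g2Term, mul_left_comm, ← zpow_natCast q 13, ← zpow_add₀ hq0]
  exact neg_one_zpow_mul_zpow_congr q (Int.even_iff.mpr (by omega)) (by push_cast; ring)

theorem g2Term_8_1_even (hq0 : q ≠ 0) (r s : ℕ) :
    g2Term q 8 1 (r + s) ((r : ℤ) - s) =
      q ^ 13 * heckeTerm 12 16 12 (q ^ 26) (q ^ 26) q (-(r : ℤ) - 1) (-(s : ℤ) - 1) := by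
  rw [heckeTerm_12_16_12 hq0, g2Term, mul_left_comm, ← zpow_natCast q 13, ← zpow_add₀ hq0]
  exact neg_one_zpow_mul_zpow_congr q (Int.even_iff.mpr (by omega)) (by push_cast; ring)

theorem g2Term_8_1_odd (hq0 : q ≠ 0) (r s : ℕ) :
    g2Term q 8 1 (r + s + 1) ((r : ℤ) - s) =
      heckeTerm 12 16 12 (q ^ 12) (q ^ 12) q (-(r : ℤ) - 1) (-(s : ℤ) - 1) := by
  rw [heckeTerm_12_16_12 hq0, g2Term]
  exact neg_one_zpow_mul_zpow_congr q (Int.even_iff.mpr (by omega)) (by push_cast; ring)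

end G2

theorem stmt14 (q : ℂ) (hq : ‖q‖ < 1) (hq0 : q ≠ 0) :
    (∑' n : ℕ, q ^ (7 * n ^ 2 + 6 * n) * (1 - q ^ (2 * n + 1)) *
        ∑ j ∈ Finset.Icc (-(n : ℤ)) (n : ℤ), (-1 : ℂ) ^ j * q ^ (-j ^ 2)) =
      heckeF 12 16 12 (q ^ 12) (q ^ 12) q +
        q ^ 13 * heckeF 12 16 12 (q ^ 26) (q ^ 26) q := by
  have hpos := hasSum_sum_Icc_of_hasSum_diagonals
    (summable_g2Term_diagonal hq hq0 (c := 6) (d := 0) (by norm_num) le_rfl 0).hasSum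
    (summable_g2Term_diagonal hq hq0 (c := 6) (d := 0) (by norm_num) le_rfl 1).hasSum
  have hneg := hasSum_sum_Icc_of_hasSum_diagonals
    (summable_g2Term_diagonal hq hq0 (c := 8) (d := 1) (by norm_num) zero_le_one 0).hasSum
    (summable_g2Term_diagonal hq hq0 (c := 8) (d := 1) (by norm_num) zero_le_one 1).hasSum
  rw [tsum_congr (g2_summand_eq hq0), (hpos.sub hneg).tsum_eq, heckeF_eq_tsum_sub_tsum,
    heckeF_eq_tsum_sub_tsum]
  simp only [Nat.add_zero, g2Term_6_0_even hq0, g2Term_6_0_odd hq0, g2Term_8_1_even hq0,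
    g2Term_8_1_odd hq0, tsum_mul_left]
  ring
end
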